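/- The divided difference operators on R satisfy the braid and nil-Coxeter relations, and commute with each other: for all admissible indices, δ_i² = 0, δ_i δ_j = δ_j δ_i when |i − j| ≥ 2, δ_i δ_{i+1} δ_i = δ_{i+1} δ_i δ_{i+1}; likewise ∂_i² = 0, ∂_i ∂_j = ∂_j ∂_i when |i − j| ≥ 2, ∂_i ∂_{i+1} ∂_i = ∂_{i+1} ∂_i ∂_{i+1}; and δ_i ∂_j = ∂_j δ_i for all i, j. -/

import Mathlib

open MvPolynomial Equiv Finset

noncomputable section

/-- The polynomial ring ℂ[t₁,…,tₙ]. -/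
abbrev Pol (n : ℕ) : Type := MvPolynomial (Fin n) ℂ

/-- The action of a permutation `w` on polynomials by the substitution `tᵢ ↦ t_{w(i)}`. -/
def pact {n : ℕ} (w : Perm (Fin n)) (f : Pol n) : Pol n := rename ⇑w f

/-- The GKM condition defining `R ⊆ ∏_{v ∈ Sₙ} ℂ[t₁,…,tₙ]`: for every `v` and every
transposition `(i j)` with `i < j`, the difference `p(v) − p((i j)v)` is divisible by
`tᵢ − tⱼ`. -/
def GKM (n : ℕ) (p : Perm (Fin n) → Pol n) : Prop :=
  ∀ (v : Perm (Fin n)) (i j : Fin n), i < j →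
    (X i - X j : Pol n) ∣ (p v - p (Equiv.swap i j * v))

/-- The length of a permutation: its number of inversions. -/
def len {n : ℕ} (w : Perm (Fin n)) : ℕ :=
  (Finset.univ.filter fun q : Fin n × Fin n => q.1 < q.2 ∧ w q.2 < w q.1).card

/-- Bruhat order: the partial order generated by `u < (i j) u` whenever `ℓ(u) < ℓ((i j)u)`. -/
def bruhatLE {n : ℕ} : Perm (Fin n) → Perm (Fin n) → Prop :=
  Relation.ReflTransGen
    (fun u v => (∃ i j : Fin n, i < j ∧ v = Equiv.swap i j * u) ∧ len u < len v)

/-- `p` is the canonical class (equivariant Schubert class) of `w`: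
(i) each component is homogeneous of degree `ℓ(w)`; (ii) `p(v) = 0` unless `v ≥ w` in
Bruhat order; (iii) `p(w) = ∏ (tᵢ − tⱼ)` over pairs `i < j` with `ℓ((i j)w) < ℓ(w)`;
and `p` satisfies the GKM conditions. -/
def IsCanonical {n : ℕ} (w : Perm (Fin n)) (p : Perm (Fin n) → Pol n) : Prop :=
  GKM n p ∧
  (∀ v, (p v).IsHomogeneous (len w)) ∧
  (∀ v, ¬ bruhatLE w v → p v = 0) ∧
  p w = ∏ q ∈ Finset.univ.filter
      (fun q : Fin n × Fin n => q.1 < q.2 ∧ len (Equiv.swap q.1 q.2 * w) < len w),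
      (X q.1 - X q.2 : Pol n)

/-- The simple transposition `sᵢ = (i, i+1)`. -/
def sT (n i : ℕ) (h : i + 1 < n) : Perm (Fin n) :=
  Equiv.swap ⟨i, Nat.lt_of_succ_lt h⟩ ⟨i + 1, h⟩

/-- The dot (left) action: `(w·p)(v) = w(p(w⁻¹ v))`. -/
def dot {n : ℕ} (w : Perm (Fin n)) (p : Perm (Fin n) → Pol n) : Perm (Fin n) → Pol n :=
  fun v => pact w (p (w⁻¹ * v))

/-- The star (right) action: `(p * w)(v) = p(vw)`. -/
def starAct {n : ℕ} (p : Perm (Fin n) → Pol n) (w : Perm (Fin n)) :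
    Perm (Fin n) → Pol n :=
  fun v => p (v * w)

/-- `R` as a `ℂ[t₁,…,tₙ]`-submodule of the product. -/
def gkmSubmodule (n : ℕ) : Submodule (Pol n) (Perm (Fin n) → Pol n) where
  carrier := {p | GKM n p}
  add_mem' := by
    intro a b ha hb v i j hij
    have h := dvd_add (ha v i j hij) (hb v i j hij)
    simpa [Pi.add_apply, add_sub_add_comm] using h
  zero_mem' := by
    intro v i j hij
    simp
  smul_mem' := by
    intro c p hp v i j hij
    have h := (hp v i j hij).mul_left c
    simpa [Pi.smul_apply, smul_eq_mul, mul_sub] using h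

/-- The maximal ideal `𝔪 = (t₁,…,tₙ) ⊆ ℂ[t₁,…,tₙ]`. -/
def mIdeal (n : ℕ) : Ideal (Pol n) := Ideal.span (Set.range (X : Fin n → Pol n))

/-- The submodule `𝔪R`: finite sums of products `c • p` with `c ∈ 𝔪` and `p ∈ R`. -/
def mR (n : ℕ) : Submodule (Pol n) (Perm (Fin n) → Pol n) :=
  Submodule.span (Pol n) {q | ∃ c ∈ mIdeal n, ∃ p, GKM n p ∧ q = c • p}

/-!
Both families are instances of one abstract situation: an operator `D` on a commutative ring
with `c * D p = p - σ p`, where `σ` is a ring involution and `c` a regular element with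
`σ c = -c`. Then `D p` is `σ`-invariant, which gives `D² = 0`. Two such operators commute as
soon as their involutions commute and each fixes the other's root. For involutions with
`σ τ σ = τ σ τ` whose roots `α, β` are permuted like the positive roots of type `A₂`
(`σ β = τ α = α + β`), `α β (α + β) · D E D p` is the alternating sum of `w p` over the six
words in `σ, τ`, which is symmetric in `σ` and `τ`; cancelling `α β (α + β)` gives the braid
relation.

For `δᵢ` the involution is the dot action of `sᵢ` and the root is the constant `tᵢ - tᵢ₊₁`;
for `∂ᵢ` it is right translation by `sᵢ` with root `v ↦ t_{v(i+1)} - t_{v(i)}`. The two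
actions commute and each fixes the other's roots, so `δᵢ ∂ⱼ = ∂ⱼ δᵢ` is the same lemma.
-/

open Function

section DividedDifference

variable {A : Type*} [CommRing A]

def IsDivDiffOn (S : Set A) (σ : A →+* A) (c : A) (D : A → A) : Prop :=
  ∀ p ∈ S, D p ∈ S ∧ c * D p = p - σ p

variable {S : Set A} {σ τ : A →+* A} {α β c d p q : A} {D E : A → A}

theorem map_eq_self_of_mul_eq_sub (hσ : Involutive σ) (hc : σ c = -c) (hc₀ : IsLeftRegular c)
    (h : c * q = p - σ p) : σ q = q := by
  have hσh := congrArg σ h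
  rw [map_mul, map_sub, hσ p, hc] at hσh
  exact hc₀ (by linear_combination -hσh - h)

theorem IsDivDiffOn.apply_apply_eq_zero (hD : IsDivDiffOn S σ c D) (hσ : Involutive σ)
    (hc : σ c = -c) (hc₀ : IsLeftRegular c) (hp : p ∈ S) : D (D p) = 0 := by
  obtain ⟨hDp, h₁⟩ := hD p hp
  apply hc₀
  dsimp only
  rw [(hD _ hDp).2, map_eq_self_of_mul_eq_sub hσ hc hc₀ h₁, sub_self, mul_zero]

theorem IsDivDiffOn.apply_comm (hD : IsDivDiffOn S σ c D) (hE : IsDivDiffOn S τ d E)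
    (hστ : Function.Commute σ τ) (hσd : σ d = d) (hτc : τ c = c) (hc₀ : IsLeftRegular c)
    (hd₀ : IsLeftRegular d) (hp : p ∈ S) : D (E p) = E (D p) := by
  obtain ⟨hDp, h₁⟩ := hD p hp
  obtain ⟨hEp, h₂⟩ := hE p hp
  have h₃ := (hD _ hEp).2
  have h₄ := (hE _ hDp).2
  have h₅ := congrArg σ h₂
  have h₆ := congrArg τ h₁
  rw [map_mul, map_sub, hσd] at h₅
  rw [map_mul, map_sub, hτc, ← hστ p] at h₆
  exact hc₀.mul hd₀ (by linear_combination d * h₃ - c * h₄ + h₂ - h₅ - h₁ + h₆)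

theorem mul_braid_eq_alternating {p₁ p₂ p₃ : A} (hσ : Involutive σ) (hσα : σ α = -α)
    (hσβ : σ β = α + β) (hτα : τ α = α + β) (hα₀ : IsLeftRegular α)
    (h₁ : α * p₁ = p - σ p) (h₂ : β * p₂ = p₁ - τ p₁) (h₃ : α * p₃ = p₂ - σ p₂) :
    α * β * (α + β) * p₃ = p - σ p - τ p + σ (τ p) + τ (σ p) - σ (τ (σ p)) := by
  have hσp₁ := map_eq_self_of_mul_eq_sub hσ hσα hα₀ h₁
  have e₁ := congrArg σ h₂
  have e₂ := congrArg τ h₁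
  have e₃ := congrArg σ e₂
  rw [map_mul, map_sub, hσβ, hσp₁] at e₁
  rw [map_mul, map_sub, hτα] at e₂
  simp only [map_mul, map_sub, hτα, map_add, hσα, hσβ] at e₃
  linear_combination β * (α + β) * h₃ + (α + β) * h₂ - β * e₁ + h₁ - e₂ + e₃

theorem IsDivDiffOn.apply_braid (hD : IsDivDiffOn S σ α D) (hE : IsDivDiffOn S τ β E)
    (hσ : Involutive σ) (hτ : Involutive τ) (hστ : ∀ a, σ (τ (σ a)) = τ (σ (τ a)))
    (hσα : σ α = -α) (hτβ : τ β = -β) (hσβ : σ β = α + β) (hτα : τ α = α + β)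
    (hα₀ : IsLeftRegular α) (hβ₀ : IsLeftRegular β) (hγ₀ : IsLeftRegular (α + β))
    (hp : p ∈ S) : D (E (D p)) = E (D (E p)) := by
  obtain ⟨h₁S, h₁⟩ := hD p hp
  obtain ⟨h₂S, h₂⟩ := hE _ h₁S
  obtain ⟨k₁S, k₁⟩ := hE p hp
  obtain ⟨k₂S, k₂⟩ := hD _ k₁S
  apply (hα₀.mul hβ₀).mul hγ₀
  dsimp only
  rw [mul_braid_eq_alternating hσ hσα hσβ hτα hα₀ h₁ h₂ (hD _ h₂S).2,
    show α * β * (α + β) = β * α * (β + α) by ring,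
    mul_braid_eq_alternating hτ hτβ (by rw [hτα, add_comm]) (by rw [hσβ, add_comm]) hβ₀
      k₁ k₂ (hE _ k₂S).2, hστ]
  ring

end DividedDifference

section FlagVariety

variable {n : ℕ}

def dotHom (w : Perm (Fin n)) : (Perm (Fin n) → Pol n) →+* (Perm (Fin n) → Pol n) :=
  (RingHom.pi fun v => (rename w).toRingHom.comp (Pi.evalRingHom _ (w⁻¹ * v))).copy (dot w) rfl

def starHom (w : Perm (Fin n)) : (Perm (Fin n) → Pol n) →+* (Perm (Fin n) → Pol n) :=
  (RingHom.pi fun v => Pi.evalRingHom _ (v * w)).copy (starAct · w) rfl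

def leftRoot (a b : Fin n) : Perm (Fin n) → Pol n := fun _ => X a - X b

def rightRoot (a b : Fin n) : Perm (Fin n) → Pol n := fun v => X (v b) - X (v a)

@[simp]
theorem dotHom_apply (w : Perm (Fin n)) (p : Perm (Fin n) → Pol n) (v : Perm (Fin n)) :
    dotHom w p v = rename w (p (w⁻¹ * v)) := rfl

@[simp]
theorem starHom_apply (w : Perm (Fin n)) (p : Perm (Fin n) → Pol n) (v : Perm (Fin n)) :
    starHom w p v = p (v * w) := rfl

theorem dotHom_dotHom (u w : Perm (Fin n)) (p : Perm (Fin n) → Pol n) :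
    dotHom u (dotHom w p) = dotHom (u * w) p := by
  funext v
  simp [rename_rename, mul_assoc]

theorem starHom_starHom (u w : Perm (Fin n)) (p : Perm (Fin n) → Pol n) :
    starHom u (starHom w p) = starHom (u * w) p := by
  funext v
  simp [mul_assoc]

theorem involutive_dotHom_swap (a b : Fin n) : Involutive (dotHom (swap a b)) := fun p => by
  rw [dotHom_dotHom, swap_mul_self]
  funext v
  simp

theorem involutive_starHom_swap (a b : Fin n) : Involutive (starHom (swap a b)) := fun p => by
  rw [starHom_starHom, swap_mul_self]
  funext v
  simp

theorem commute_dotHom_starHom (u w : Perm (Fin n)) : Function.Commute (dotHom u) (starHom w) :=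
  fun p => by
    funext v
    simp [mul_assoc]

theorem commute_dotHom_swap {a b c d : Fin n} (hac : a ≠ c) (had : a ≠ d) (hbc : b ≠ c)
    (hbd : b ≠ d) : Function.Commute (dotHom (swap a b)) (dotHom (swap c d)) := fun p => by
  rw [dotHom_dotHom, dotHom_dotHom, mul_swap_eq_swap_mul,
    swap_apply_of_ne_of_ne hac.symm hbc.symm, swap_apply_of_ne_of_ne had.symm hbd.symm]

theorem commute_starHom_swap {a b c d : Fin n} (hac : a ≠ c) (had : a ≠ d) (hbc : b ≠ c)
    (hbd : b ≠ d) : Function.Commute (starHom (swap a b)) (starHom (swap c d)) := fun p => by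
  rw [starHom_starHom, starHom_starHom, mul_swap_eq_swap_mul,
    swap_apply_of_ne_of_ne hac.symm hbc.symm, swap_apply_of_ne_of_ne had.symm hbd.symm]

theorem swap_braid {a b c : Fin n} (hab : a ≠ b) (hac : a ≠ c) (hbc : b ≠ c) :
    swap a b * swap b c * swap a b = swap b c * swap a b * swap b c := by
  rw [swap_mul_swap_mul_swap hab hac, swap_comm a b, swap_comm b c,
    swap_mul_swap_mul_swap hbc.symm hac.symm, swap_comm]

theorem dotHom_leftRoot (w : Perm (Fin n)) (a b : Fin n) :
    dotHom w (leftRoot a b) = leftRoot (w a) (w b) := by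
  funext v
  simp [leftRoot]

theorem dotHom_rightRoot (w : Perm (Fin n)) (a b : Fin n) :
    dotHom w (rightRoot a b) = rightRoot a b := by
  funext v
  simp [rightRoot]

theorem starHom_leftRoot (w : Perm (Fin n)) (a b : Fin n) :
    starHom w (leftRoot a b) = leftRoot a b := rfl

theorem starHom_rightRoot (w : Perm (Fin n)) (a b : Fin n) :
    starHom w (rightRoot a b) = rightRoot (w a) (w b) := rfl

theorem neg_leftRoot (a b : Fin n) : -leftRoot a b = leftRoot b a := by
  funext v
  simp [leftRoot]

theorem neg_rightRoot (a b : Fin n) : -rightRoot a b = rightRoot b a := by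
  funext v
  simp [rightRoot]

theorem leftRoot_add_leftRoot (a b c : Fin n) : leftRoot a b + leftRoot b c = leftRoot a c := by
  funext v
  simp [leftRoot]

theorem rightRoot_add_rightRoot (a b c : Fin n) :
    rightRoot a b + rightRoot b c = rightRoot a c := by
  funext v
  simp [rightRoot]

theorem isLeftRegular_leftRoot {a b : Fin n} (h : a ≠ b) : IsLeftRegular (leftRoot a b) :=
  Pi.isLeftRegular_iff.2 fun _ => (IsRegular.of_ne_zero (sub_ne_zero.2 (X_injective.ne h))).left

theorem isLeftRegular_rightRoot {a b : Fin n} (h : a ≠ b) : IsLeftRegular (rightRoot a b) :=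
  Pi.isLeftRegular_iff.2 fun v =>
    (IsRegular.of_ne_zero (sub_ne_zero.2 (X_injective.ne (v.injective.ne h.symm)))).left

theorem isDivDiffOn_dotHom_swap {P : (Perm (Fin n) → Pol n) → Prop}
    {D : (Perm (Fin n) → Pol n) → Perm (Fin n) → Pol n} {a b : Fin n}
    (h : ∀ p, P p → P (D p) ∧
      ∀ v, p v - pact (swap a b) (p (swap a b * v)) = (X a - X b : Pol n) * D p v) :
    IsDivDiffOn {p | P p} (dotHom (swap a b)) (leftRoot a b) D := fun p hp =>
  ⟨(h p hp).1, funext fun v => by simpa [leftRoot, pact] using ((h p hp).2 v).symm⟩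

theorem isDivDiffOn_starHom_swap {P : (Perm (Fin n) → Pol n) → Prop}
    {D : (Perm (Fin n) → Pol n) → Perm (Fin n) → Pol n} {a b : Fin n}
    (h : ∀ p, P p → P (D p) ∧
      ∀ v, p v - p (v * swap a b) = (X (v b) - X (v a) : Pol n) * D p v) :
    IsDivDiffOn {p | P p} (starHom (swap a b)) (rightRoot a b) D := fun p hp =>
  ⟨(h p hp).1, funext fun v => by simp [rightRoot, (h p hp).2 v]⟩

variable {S : Set (Perm (Fin n) → Pol n)} {D E : (Perm (Fin n) → Pol n) → Perm (Fin n) → Pol n}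
  {a b c d : Fin n} {p : Perm (Fin n) → Pol n}

theorem IsDivDiffOn.left_apply_apply_eq_zero
    (hD : IsDivDiffOn S (dotHom (swap a b)) (leftRoot a b) D) (hab : a ≠ b) (hp : p ∈ S) :
    D (D p) = 0 :=
  hD.apply_apply_eq_zero (involutive_dotHom_swap a b)
    (by rw [dotHom_leftRoot, swap_apply_left, swap_apply_right, neg_leftRoot])
    (isLeftRegular_leftRoot hab) hp

theorem IsDivDiffOn.right_apply_apply_eq_zero
    (hD : IsDivDiffOn S (starHom (swap a b)) (rightRoot a b) D) (hab : a ≠ b) (hp : p ∈ S) :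
    D (D p) = 0 :=
  hD.apply_apply_eq_zero (involutive_starHom_swap a b)
    (by rw [starHom_rightRoot, swap_apply_left, swap_apply_right, neg_rightRoot])
    (isLeftRegular_rightRoot hab) hp

theorem IsDivDiffOn.left_apply_comm (hD : IsDivDiffOn S (dotHom (swap a b)) (leftRoot a b) D)
    (hE : IsDivDiffOn S (dotHom (swap c d)) (leftRoot c d) E) (hab : a ≠ b) (hcd : c ≠ d)
    (hac : a ≠ c) (had : a ≠ d) (hbc : b ≠ c) (hbd : b ≠ d) (hp : p ∈ S) :
    D (E p) = E (D p) :=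
  hD.apply_comm hE (commute_dotHom_swap hac had hbc hbd)
    (by rw [dotHom_leftRoot, swap_apply_of_ne_of_ne hac.symm hbc.symm,
      swap_apply_of_ne_of_ne had.symm hbd.symm])
    (by rw [dotHom_leftRoot, swap_apply_of_ne_of_ne hac had, swap_apply_of_ne_of_ne hbc hbd])
    (isLeftRegular_leftRoot hab) (isLeftRegular_leftRoot hcd) hp

theorem IsDivDiffOn.right_apply_comm (hD : IsDivDiffOn S (starHom (swap a b)) (rightRoot a b) D)
    (hE : IsDivDiffOn S (starHom (swap c d)) (rightRoot c d) E) (hab : a ≠ b) (hcd : c ≠ d)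
    (hac : a ≠ c) (had : a ≠ d) (hbc : b ≠ c) (hbd : b ≠ d) (hp : p ∈ S) :
    D (E p) = E (D p) :=
  hD.apply_comm hE (commute_starHom_swap hac had hbc hbd)
    (by rw [starHom_rightRoot, swap_apply_of_ne_of_ne hac.symm hbc.symm,
      swap_apply_of_ne_of_ne had.symm hbd.symm])
    (by rw [starHom_rightRoot, swap_apply_of_ne_of_ne hac had, swap_apply_of_ne_of_ne hbc hbd])
    (isLeftRegular_rightRoot hab) (isLeftRegular_rightRoot hcd) hp

theorem IsDivDiffOn.left_right_apply_comm
    (hD : IsDivDiffOn S (dotHom (swap a b)) (leftRoot a b) D)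
    (hE : IsDivDiffOn S (starHom (swap c d)) (rightRoot c d) E) (hab : a ≠ b) (hcd : c ≠ d)
    (hp : p ∈ S) : D (E p) = E (D p) :=
  hD.apply_comm hE (commute_dotHom_starHom _ _) (dotHom_rightRoot _ c d)
    (starHom_leftRoot _ a b) (isLeftRegular_leftRoot hab) (isLeftRegular_rightRoot hcd) hp

theorem IsDivDiffOn.left_apply_braid (hD : IsDivDiffOn S (dotHom (swap a b)) (leftRoot a b) D)
    (hE : IsDivDiffOn S (dotHom (swap b c)) (leftRoot b c) E) (hab : a ≠ b) (hac : a ≠ c)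
    (hbc : b ≠ c) (hp : p ∈ S) : D (E (D p)) = E (D (E p)) :=
  hD.apply_braid hE (involutive_dotHom_swap a b) (involutive_dotHom_swap b c)
    (fun q => by simp only [dotHom_dotHom, ← mul_assoc, swap_braid hab hac hbc])
    (by rw [dotHom_leftRoot, swap_apply_left, swap_apply_right, neg_leftRoot])
    (by rw [dotHom_leftRoot, swap_apply_left, swap_apply_right, neg_leftRoot])
    (by rw [dotHom_leftRoot, swap_apply_right, swap_apply_of_ne_of_ne hac.symm hbc.symm,
      leftRoot_add_leftRoot])
    (by rw [dotHom_leftRoot, swap_apply_left, swap_apply_of_ne_of_ne hab hac,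
      leftRoot_add_leftRoot])
    (isLeftRegular_leftRoot hab) (isLeftRegular_leftRoot hbc)
    (by rw [leftRoot_add_leftRoot]; exact isLeftRegular_leftRoot hac) hp

theorem IsDivDiffOn.right_apply_braid
    (hD : IsDivDiffOn S (starHom (swap a b)) (rightRoot a b) D)
    (hE : IsDivDiffOn S (starHom (swap b c)) (rightRoot b c) E) (hab : a ≠ b) (hac : a ≠ c)
    (hbc : b ≠ c) (hp : p ∈ S) : D (E (D p)) = E (D (E p)) :=
  hD.apply_braid hE (involutive_starHom_swap a b) (involutive_starHom_swap b c)
    (fun q => by simp only [starHom_starHom, ← mul_assoc, swap_braid hab hac hbc])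
    (by rw [starHom_rightRoot, swap_apply_left, swap_apply_right, neg_rightRoot])
    (by rw [starHom_rightRoot, swap_apply_left, swap_apply_right, neg_rightRoot])
    (by rw [starHom_rightRoot, swap_apply_right, swap_apply_of_ne_of_ne hac.symm hbc.symm,
      rightRoot_add_rightRoot])
    (by rw [starHom_rightRoot, swap_apply_left, swap_apply_of_ne_of_ne hab hac,
      rightRoot_add_rightRoot])
    (isLeftRegular_rightRoot hab) (isLeftRegular_rightRoot hbc)
    (by rw [rightRoot_add_rightRoot]; exact isLeftRegular_rightRoot hac) hp

end FlagVariety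

/-- the divided difference operators on `R` satisfy the nil-Coxeter and
braid relations, and `δᵢ` commutes with `∂ⱼ`.  Here `Dl i` is `δᵢ` and `Dr i` is `∂ᵢ`,
given together with their componentwise defining equations and the fact (Statements 6, 7)
that they map `R` to `R`. -/
theorem divided_difference_braid_relations (n : ℕ)
    (Dl Dr : ∀ i : ℕ, i + 1 < n → (Perm (Fin n) → Pol n) → (Perm (Fin n) → Pol n))
    (hDl : ∀ (i : ℕ) (hi : i + 1 < n) (p), GKM n p → GKM n (Dl i hi p) ∧ ∀ v,
        p v - pact (sT n i hi) (p (sT n i hi * v))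
          = (X ⟨i, by omega⟩ - X ⟨i + 1, hi⟩ : Pol n) * Dl i hi p v)
    (hDr : ∀ (i : ℕ) (hi : i + 1 < n) (p), GKM n p → GKM n (Dr i hi p) ∧ ∀ v,
        p v - p (v * sT n i hi)
          = (X (v ⟨i + 1, hi⟩) - X (v ⟨i, by omega⟩) : Pol n) * Dr i hi p v) :
    (∀ (i : ℕ) (hi : i + 1 < n) (p), GKM n p → Dl i hi (Dl i hi p) = 0) ∧
    (∀ (i j : ℕ) (hi : i + 1 < n) (hj : j + 1 < n), i + 2 ≤ j ∨ j + 2 ≤ i →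
      ∀ p, GKM n p → Dl i hi (Dl j hj p) = Dl j hj (Dl i hi p)) ∧
    (∀ (i : ℕ) (hi : i + 2 < n) (p), GKM n p →
      Dl i (by omega) (Dl (i + 1) hi (Dl i (by omega) p))
        = Dl (i + 1) hi (Dl i (by omega) (Dl (i + 1) hi p))) ∧
    (∀ (i : ℕ) (hi : i + 1 < n) (p), GKM n p → Dr i hi (Dr i hi p) = 0) ∧
    (∀ (i j : ℕ) (hi : i + 1 < n) (hj : j + 1 < n), i + 2 ≤ j ∨ j + 2 ≤ i →
      ∀ p, GKM n p → Dr i hi (Dr j hj p) = Dr j hj (Dr i hi p)) ∧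
    (∀ (i : ℕ) (hi : i + 2 < n) (p), GKM n p →
      Dr i (by omega) (Dr (i + 1) hi (Dr i (by omega) p))
        = Dr (i + 1) hi (Dr i (by omega) (Dr (i + 1) hi p))) ∧
    (∀ (i j : ℕ) (hi : i + 1 < n) (hj : j + 1 < n) (p), GKM n p →
      Dl i hi (Dr j hj p) = Dr j hj (Dl i hi p)) := by
  have hL := fun i hi => isDivDiffOn_dotHom_swap (hDl i hi)
  have hR := fun i hi => isDivDiffOn_starHom_swap (hDr i hi)
  refine ⟨fun i hi p hp => (hL i hi).left_apply_apply_eq_zero ?_ hp,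
    fun i j hi hj hij p hp => (hL i hi).left_apply_comm (hL j hj) ?_ ?_ ?_ ?_ ?_ ?_ hp,
    fun i hi p hp => (hL i _).left_apply_braid (hL (i + 1) hi) ?_ ?_ ?_ hp,
    fun i hi p hp => (hR i hi).right_apply_apply_eq_zero ?_ hp,
    fun i j hi hj hij p hp => (hR i hi).right_apply_comm (hR j hj) ?_ ?_ ?_ ?_ ?_ ?_ hp,
    fun i hi p hp => (hR i _).right_apply_braid (hR (i + 1) hi) ?_ ?_ ?_ hp,
    fun i j hi hj p hp => (hL i hi).left_right_apply_comm (hR j hj) ?_ ?_ hp⟩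
  all_goals
    simp only [ne_eq, Fin.mk.injEq]
    omega
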